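/- arXiv:2509.12986 — 2 statements merged into one kernel-verified Lean document; each statement's English description precedes it below -/
import Mathlib

section
/- (Minimum Kraus rank of a CPTP extension of a classical function.) Let f : {0,1}^n → {0,1}^n, d := 2^n, and ℓ := max_{y∈{0,1}^n} |f⁻¹(y)|. (i) If K₁,…,K_r ∈ M_d(ℂ) satisfy ∑_{i=1}^r K_i* K_i = I_d and ∑_{i=1}^r K_i |x⟩⟨x| K_i* = |f(x)⟩⟨f(x)| for every x ∈ {0,1}^n, then r ≥ ℓ. (ii) Conversely, there exist K₁,…,K_ℓ ∈ M_d(ℂ) with ∑_{i=1}^ℓ K_i* K_i = I_d and ∑_{i=1}^ℓ K_i |x⟩⟨x| K_i* = |f(x)⟩⟨f(x)| for every x ∈ {0,1}^n. Hence the minimum number of Kraus operators of a CPTP extension of f equals ℓ. -/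
open Matrix

noncomputable section

/-- The largest fiber size `ℓ = max_y |f⁻¹(y)|` of a function on a finite type. -/
def maxFiber {B : Type*} [Fintype B] [DecidableEq B] (f : B → B) : ℕ :=
  Finset.univ.sup fun y => (Finset.univ.filter fun x => f x = y).card

lemma kraus_entry {d : ℕ} (K : Matrix (Fin d) (Fin d) ℂ) (x a b : Fin d) :
    (K * Matrix.single x x (1 : ℂ) * Kᴴ) a b = K a x * star (K b x) := by
  rw [Matrix.mul_apply, Finset.sum_eq_single x]
  · rw [Matrix.mul_single_apply_same, Matrix.conjTranspose_apply, mul_one]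
  · intro j _ hj
    simp [hj]
  · simp

/-- Minimum Kraus rank of a CPTP extension of a classical function
`f : {0,1}^n → {0,1}^n` (with `{0,1}^n` identified with `Fin (2^n)`):
(i) any Kraus representation of a CPTP extension of `f` has at least `ℓ = max_y |f⁻¹(y)|`
Kraus operators, and (ii) there is one with exactly `ℓ` Kraus operators. -/
theorem min_kraus_rank_classical (n : ℕ) (f : Fin (2 ^ n) → Fin (2 ^ n)) :
    (∀ (r : ℕ) (K : Fin r → Matrix (Fin (2 ^ n)) (Fin (2 ^ n)) ℂ),
      (∑ i, (K i)ᴴ * K i = 1) →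
      (∀ x, ∑ i, K i * Matrix.single x x (1 : ℂ) * (K i)ᴴ =
        Matrix.single (f x) (f x) 1) →
      maxFiber f ≤ r) ∧
    (∃ K : Fin (maxFiber f) → Matrix (Fin (2 ^ n)) (Fin (2 ^ n)) ℂ,
      (∑ i, (K i)ᴴ * K i = 1) ∧
      (∀ x, ∑ i, K i * Matrix.single x x (1 : ℂ) * (K i)ᴴ =
        Matrix.single (f x) (f x) 1)) := by
  have hd : 0 < 2 ^ n := Nat.pow_pos (by norm_num)
  haveI : Nonempty (Fin (2 ^ n)) := ⟨⟨0, hd⟩⟩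
  constructor
  · -- lower bound
    intro r K hK hKX
    -- every column of K i is supported on row f x
    have key : ∀ (i : Fin r) (x a : Fin (2 ^ n)), a ≠ f x → K i a x = 0 := by
      intro i x a ha
      have h1 : (∑ j, K j * Matrix.single x x (1 : ℂ) * (K j)ᴴ) a a
          = Matrix.single (f x) (f x) (1 : ℂ) a a := by rw [hKX x]
      rw [Matrix.sum_apply] at h1
      simp_rw [kraus_entry] at h1
      rw [Matrix.single_apply_of_ne _ _ _ _ _ (by tauto)] at h1
      simp_rw [Complex.star_def, Complex.mul_conj] at h1
      norm_cast at h1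
      have h2 := (Finset.sum_eq_zero_iff_of_nonneg
        (fun j _ => Complex.normSq_nonneg (K j a x))).1 h1 i (Finset.mem_univ i)
      exact Complex.normSq_eq_zero.1 h2
    have inner_eq : ∀ x y : Fin (2 ^ n), f x = f y →
        ∑ i, star (K i (f x) x) * K i (f y) y = if x = y then (1 : ℂ) else 0 := by
      intro x y hxy
      have h1 : (∑ i, (K i)ᴴ * K i) x y = (1 : Matrix (Fin (2 ^ n)) (Fin (2 ^ n)) ℂ) x y := by
        rw [hK]
      rw [Matrix.sum_apply, Matrix.one_apply] at h1
      rw [← h1]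
      refine Finset.sum_congr rfl fun i _ => ?_
      rw [Matrix.mul_apply]
      rw [Finset.sum_eq_single (f x)]
      · rw [Matrix.conjTranspose_apply, hxy]
      · intro z _ hz
        rw [Matrix.conjTranspose_apply, key i x z hz, star_zero, zero_mul]
      · simp
    obtain ⟨y0, -, hy0⟩ := Finset.exists_mem_eq_sup Finset.univ Finset.univ_nonempty
      (fun y => (Finset.univ.filter fun x => f x = y).card)
    set S := Finset.univ.filter (fun x => f x = y0) with hS
    let v : Fin (2 ^ n) → EuclideanSpace ℂ (Fin r) := fun x => WithLp.toLp 2 (fun i => K i (f x) x)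
    have hORTHO : Orthonormal ℂ (fun s : {x // x ∈ S} => v s.1) := by
      rw [orthonormal_iff_ite]
      intro s t
      have hfs : f s.1 = y0 := (Finset.mem_filter.1 s.2).2
      have hft : f t.1 = y0 := (Finset.mem_filter.1 t.2).2
      have : (inner ℂ (v s.1) (v t.1) : ℂ)
          = ∑ i, star (K i (f s.1) s.1) * K i (f t.1) t.1 := by
        rw [PiLp.inner_apply]
        exact Finset.sum_congr rfl fun i _ => by rw [RCLike.inner_apply', Complex.star_def]
      rw [this, inner_eq s.1 t.1 (hfs.trans hft.symm)]
      simp only [Subtype.ext_iff]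
    have hcard := hORTHO.linearIndependent.fintype_card_le_finrank
    rw [finrank_euclideanSpace_fin, Fintype.card_coe] at hcard
    calc maxFiber f = S.card := by rw [maxFiber, hy0]
      _ ≤ r := hcard
  · -- construction
    set ℓ := maxFiber f with hℓ
    let idx : Fin (2 ^ n) → ℕ := fun x => (Finset.univ.filter fun z => f z = f x ∧ z < x).card
    have hidx_lt : ∀ x, idx x < ℓ := by
      intro x
      show (Finset.univ.filter fun z => f z = f x ∧ z < x).card < ℓ
      have h1 : (Finset.univ.filter fun z => f z = f x ∧ z < x)
          ⊂ (Finset.univ.filter fun z => f z = f x) := by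
        refine (Finset.ssubset_iff_of_subset
          (Finset.monotone_filter_right _ fun z _ hz => hz.1)).2 ⟨x, ?_, ?_⟩
        · simp
        · simp
      have h2 := Finset.card_lt_card h1
      have h3 : (Finset.univ.filter fun z => f z = f x).card ≤ ℓ := by
        rw [hℓ]
        exact Finset.le_sup (f := fun y => (Finset.univ.filter fun x => f x = y).card)
          (Finset.mem_univ (f x))
      omega
    have hinj : ∀ a b, f a = f b → idx a = idx b → a = b := by
      have mono : ∀ a b : Fin (2 ^ n), f a = f b → a < b → idx a < idx b := by
        intro a b hf hab
        apply Finset.card_lt_card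
        refine (Finset.ssubset_iff_of_subset ?_).2 ⟨a, ?_, ?_⟩
        · refine Finset.monotone_filter_right _ fun z _ hz => ?_
          exact ⟨hz.1.trans hf, hz.2.trans hab⟩
        · simp [hf, hab]
        · simp
      intro a b hf h
      by_contra hne
      rcases lt_or_gt_of_ne hne with hlt | hlt
      · exact absurd h (mono a b hf hlt).ne
      · exact absurd h.symm (mono b a hf.symm hlt).ne
    refine ⟨fun i => Matrix.of fun a b => if f b = a ∧ idx b = (i : ℕ) then (1 : ℂ) else 0,
      ?_, ?_⟩
    · ext a b
      rw [Matrix.sum_apply, Matrix.one_apply]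
      simp_rw [Matrix.mul_apply, Matrix.conjTranspose_apply, Matrix.of_apply]
      by_cases hab : a = b
      · subst hab
        rw [if_pos rfl]
        rw [Finset.sum_eq_single (⟨idx a, hidx_lt a⟩ : Fin ℓ)]
        · rw [Finset.sum_eq_single (f a)]
          · simp
          · intro z _ hz
            rw [if_neg (by exact fun h => hz h.1.symm), star_zero, zero_mul]
          · simp
        · intro i _ hi
          refine Finset.sum_eq_zero fun z _ => ?_
          have hne : idx a ≠ (i : ℕ) := fun h => hi (Fin.ext h.symm)
          rw [if_neg (by tauto), star_zero, zero_mul]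
        · simp
      · rw [if_neg hab]
        refine Finset.sum_eq_zero fun i _ => Finset.sum_eq_zero fun z _ => ?_
        by_cases h1 : f a = z ∧ idx a = (i : ℕ)
        · by_cases h2 : f b = z ∧ idx b = (i : ℕ)
          · exact absurd (hinj a b (h1.1.trans h2.1.symm) (h1.2.trans h2.2.symm)) hab
          · rw [if_neg h2, mul_zero]
        · rw [if_neg h1, star_zero, zero_mul]
    · intro x
      ext a b
      rw [Matrix.sum_apply]
      simp_rw [kraus_entry, Matrix.of_apply]
      rw [Finset.sum_eq_single (⟨idx x, hidx_lt x⟩ : Fin ℓ)]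
      · by_cases h1 : f x = a <;> by_cases h2 : f x = b <;>
          simp [Matrix.single, h1, h2]
      · intro i _ hi
        have hne : idx x ≠ (i : ℕ) := fun h => hi (Fin.ext h.symm)
        rw [if_neg (by tauto), zero_mul]
      · simp

end
end

section
/- (Cycle-counting sum over parity-alternating permutations.) For every positive integer n and every real number x (more generally, every element x of a commutative ring), ∑_{π ∈ S̃_{2n}} x^{cyc(π)} = n! · x·(x+1)·(x+2)⋯(x+n−1), where S̃_{2n} := { π ∈ S_{2n} : for every i ∈ {1,…,2n}, i and π(i) have opposite parity } is the set of parity-alternating permutations of {1,…,2n}, and cyc(π) denotes the number of cycles in the cycle decomposition of π (counting cycles of length 1; parity-alternating permutations have no fixed points). -/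
open Equiv Equiv.Perm Finset

namespace ParityCyc


variable {A B : Type*}

lemma transport (σ : Perm A) (τ : Perm B) (g : A → B)
    (hg : ∀ a, τ.SameCycle (g (σ a)) (g a)) {x y : A} (h : σ.SameCycle x y) :
    τ.SameCycle (g x) (g y) := by
  obtain ⟨i, hi⟩ := h
  subst hi
  suffices H : ∀ i : ℤ, τ.SameCycle (g ((σ ^ i) x)) (g x) from (H i).symm
  intro i
  induction i using Int.induction_on with
  | zero => exact SameCycle.refl τ (g x)
  | succ k ih =>
      have hstep : ((σ : Perm A) ^ ((k : ℤ) + 1)) x = σ ((σ ^ (k : ℤ)) x) := by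
        rw [add_comm, zpow_one_add]; rfl
      rw [hstep]
      exact (hg _).trans ih
  | pred k ih =>
      have hstep : σ (((σ : Perm A) ^ (-(k : ℤ) - 1)) x) = (σ ^ (-(k : ℤ))) x := by
        rw [← Equiv.Perm.mul_apply, ← zpow_one_add]
        norm_num
      have h2 := hg ((σ ^ (-(k : ℤ) - 1)) x)
      rw [hstep] at h2
      exact h2.symm.trans ih

lemma cardQuot_eq (σ : Perm A) (τ : Perm B) (g : A → B) (f : B → A)
    (hg : ∀ a, τ.SameCycle (g (σ a)) (g a))
    (hf : ∀ b, σ.SameCycle (f (τ b)) (f b))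
    (hgf : ∀ a, f (g a) = a)
    (hfg : ∀ b, τ.SameCycle (g (f b)) b) :
    Nat.card (Quotient (SameCycle.setoid σ)) = Nat.card (Quotient (SameCycle.setoid τ)) := by
  apply Nat.card_congr
  refine
    { toFun := Quotient.lift (fun a => Quotient.mk (SameCycle.setoid τ) (g a))
        (fun a b h => Quotient.sound (transport σ τ g hg h))
      invFun := Quotient.lift (fun b => Quotient.mk (SameCycle.setoid σ) (f b))
        (fun a b h => Quotient.sound (transport τ σ f hf h))
      left_inv := ?_
      right_inv := ?_ }
  · refine Quotient.ind fun a => ?_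
    simp only [Quotient.lift_mk, hgf]
  · refine Quotient.ind fun b => ?_
    simp only [Quotient.lift_mk]
    exact Quotient.sound (hfg b)

lemma cyc_eq [Fintype A] [DecidableEq A] (σ : Perm A) :
    Multiset.card σ.cycleType + (Finset.univ.filter fun a => σ a = a).card
      = Nat.card (Quotient (SameCycle.setoid σ)) := by
  classical
  set T := ({c // c ∈ σ.cycleFactorsFinset} ⊕ {a // σ a = a}) with hT
  have hFdef : ∀ a : A, σ a ≠ a → σ.cycleOf a ∈ σ.cycleFactorsFinset := fun a h => by
    rw [cycleOf_mem_cycleFactorsFinset_iff]; exact mem_support.mpr h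
  let f0 : A → T := fun a =>
    if h : σ a = a then Sum.inr ⟨a, h⟩ else Sum.inl ⟨σ.cycleOf a, hFdef a h⟩
  have hwd : ∀ a b : A, σ.SameCycle a b → f0 a = f0 b := by
    intro a b h
    by_cases ha : σ a = a
    · have : a = b := h.eq_of_left ha
      subst this; rfl
    · have hb : ¬ σ b = b := fun hb => ha ((h.apply_eq_self_iff).mpr hb)
      simp only [f0, dif_neg ha, dif_neg hb]
      exact congrArg _ (Subtype.ext (h.cycleOf_eq))
  let F : Quotient (SameCycle.setoid σ) → T := Quotient.lift f0 hwd
  have hinj : Function.Injective F := by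
    refine Quotient.ind₂ fun a b h => ?_
    have h' : f0 a = f0 b := h
    refine Quotient.sound ?_
    by_cases ha : σ a = a
    · by_cases hb : σ b = b
      · simp only [f0, dif_pos ha, dif_pos hb] at h'
        have hab : a = b := congrArg Subtype.val (Sum.inr.inj h')
        exact hab.sameCycle σ
      · simp only [f0, dif_pos ha, dif_neg hb] at h'
        exact absurd h' (by simp)
    · by_cases hb : σ b = b
      · simp only [f0, dif_neg ha, dif_pos hb] at h'
        exact absurd h' (by simp)
      · simp only [f0, dif_neg ha, dif_neg hb] at h'
        have h'' : σ.cycleOf a = σ.cycleOf b := congrArg Subtype.val (Sum.inl.inj h')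
        have hbmem : b ∈ (σ.cycleOf b).support :=
          mem_support_cycleOf_iff.mpr ⟨SameCycle.rfl, mem_support.mpr hb⟩
        rw [← h''] at hbmem
        exact (mem_support_cycleOf_iff.mp hbmem).1
  have hsurj : Function.Surjective F := by
    rintro (⟨c, hc⟩ | ⟨a, ha⟩)
    · obtain ⟨hcyc, hcomm⟩ := mem_cycleFactorsFinset_iff.mp hc
      obtain ⟨a, ha1, -⟩ := hcyc
      have hamem : a ∈ c.support := mem_support.mpr ha1
      have haσ : σ a ≠ a := by rw [← hcomm a hamem]; exact ha1
      refine ⟨Quotient.mk _ a, ?_⟩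
      show f0 a = _
      simp only [f0, dif_neg haσ]
      exact congrArg _ (Subtype.ext (cycle_is_cycleOf hamem hc).symm)
    · refine ⟨Quotient.mk _ a, ?_⟩
      show f0 a = _
      simp only [f0, dif_pos ha]
  have hcard : Nat.card (Quotient (SameCycle.setoid σ)) = Nat.card T :=
    Nat.card_eq_of_bijective F ⟨hinj, hsurj⟩
  rw [hcard, hT, Nat.card_sum]
  congr 1
  · rw [Nat.card_eq_fintype_card, Fintype.card_coe, cycleType_def, Multiset.card_map]
    rfl
  · rw [Nat.card_eq_fintype_card, Fintype.card_subtype]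


lemma ncyc_decomposeFin_succ {n : ℕ} (q : Fin n) (σ : Perm (Fin n)) :
    Nat.card (Quotient (SameCycle.setoid (Equiv.Perm.decomposeFin.symm (q.succ, σ)))) =
      Nat.card (Quotient (SameCycle.setoid σ)) := by
  set σ' := Equiv.Perm.decomposeFin.symm (q.succ, σ) with hσ'
  have h0 : σ' 0 = q.succ := Equiv.Perm.decomposeFin_symm_apply_zero q.succ σ
  have hs : ∀ k : Fin n, σ' k.succ = Equiv.swap 0 q.succ (σ k).succ := fun k =>
    Equiv.Perm.decomposeFin_symm_apply_succ σ q.succ k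
  refine (cardQuot_eq σ σ' Fin.succ (Fin.cases q fun k => k) ?_ ?_ ?_ ?_).symm
  · intro a
    by_cases h : σ a = q
    · have e1 : σ' a.succ = 0 := by rw [hs, h, swap_apply_right]
      have e2 : σ' (σ' a.succ) = (σ a).succ := by rw [e1, h0, h]
      rw [← e2]
      exact sameCycle_apply_left.mpr (sameCycle_apply_left.mpr SameCycle.rfl)
    · have e1 : σ' a.succ = (σ a).succ := by
        rw [hs]
        exact swap_apply_of_ne_of_ne (Fin.succ_ne_zero _)
          (fun hq => h (Fin.succ_injective _ hq))
      rw [← e1]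
      exact sameCycle_apply_left.mpr SameCycle.rfl
  · intro b
    induction b using Fin.cases with
    | zero =>
        rw [h0]
        simp only [Fin.cases_succ, Fin.cases_zero]
        exact SameCycle.rfl
    | succ k =>
        by_cases h : σ k = q
        · have e1 : σ' k.succ = 0 := by rw [hs, h, swap_apply_right]
          rw [e1]
          simp only [Fin.cases_zero, Fin.cases_succ, ← h]
          exact sameCycle_apply_left.mpr SameCycle.rfl
        · have e1 : σ' k.succ = (σ k).succ := by
            rw [hs]
            exact swap_apply_of_ne_of_ne (Fin.succ_ne_zero _)
              (fun hq => h (Fin.succ_injective _ hq))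
          rw [e1]
          simp only [Fin.cases_succ]
          exact sameCycle_apply_left.mpr SameCycle.rfl
  · intro a; simp
  · intro b
    induction b using Fin.cases with
    | zero =>
        simp only [Fin.cases_zero]
        rw [← h0]
        exact sameCycle_apply_left.mpr SameCycle.rfl
    | succ k =>
        simp only [Fin.cases_succ]
        exact SameCycle.rfl

lemma ncyc_decomposeFin_zero {n : ℕ} (σ : Perm (Fin n)) :
    Nat.card (Quotient (SameCycle.setoid (Equiv.Perm.decomposeFin.symm (0, σ)))) =
      Nat.card (Quotient (SameCycle.setoid σ)) + 1 := by
  set σ' := Equiv.Perm.decomposeFin.symm ((0 : Fin (n+1)), σ) with hσ'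
  have h0 : σ' 0 = 0 := Equiv.Perm.decomposeFin_symm_apply_zero 0 σ
  have hs : ∀ k : Fin n, σ' k.succ = (σ k).succ := fun k => by
    rw [Equiv.Perm.decomposeFin_symm_apply_succ σ 0 k, Equiv.swap_self]
    rfl
  have hg : ∀ a : Fin n, σ'.SameCycle ((σ a).succ) (a.succ) := fun a => by
    rw [← hs]; exact sameCycle_apply_left.mpr SameCycle.rfl
  let G : Quotient (SameCycle.setoid σ) ⊕ Unit → Quotient (SameCycle.setoid σ') :=
    Sum.elim
      (Quotient.lift (fun a => Quotient.mk (SameCycle.setoid σ') a.succ)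
        (fun a b h => Quotient.sound (transport σ σ' Fin.succ hg h)))
      (fun _ : Unit => Quotient.mk (SameCycle.setoid σ') (0 : Fin (n+1)))
  have hinj : Function.Injective G := by
    rintro (u | u) (v | v) h
    · induction u using Quotient.ind with | _ a =>
      induction v using Quotient.ind with | _ b =>
      have hsc : σ'.SameCycle a.succ b.succ := Quotient.exact h
      have hf : ∀ c : Fin (n+1), σ.SameCycle
          ((Fin.cases a (fun k => k) : Fin (n+1) → Fin n) (σ' c))
          ((Fin.cases a (fun k => k) : Fin (n+1) → Fin n) c) := by
        intro c
        induction c using Fin.cases with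
        | zero => rw [h0]
        | succ k =>
            rw [hs]
            simp only [Fin.cases_succ]
            exact sameCycle_apply_left.mpr SameCycle.rfl
      have := transport σ' σ (Fin.cases a fun k => k) hf hsc
      simp only [Fin.cases_succ] at this
      exact congrArg Sum.inl (Quotient.sound this)
    · exfalso
      induction u using Quotient.ind with | _ a =>
      have hsc : σ'.SameCycle a.succ 0 := Quotient.exact h
      exact Fin.succ_ne_zero a (hsc.eq_of_right h0)
    · exfalso
      induction v using Quotient.ind with | _ a =>
      have hsc : σ'.SameCycle a.succ 0 := (Quotient.exact h).symm
      exact Fin.succ_ne_zero a (hsc.eq_of_right h0)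
    · exact congrArg Sum.inr (Subsingleton.elim u v)
  have hsurj : Function.Surjective G := by
    intro c
    induction c using Quotient.ind with | _ a =>
    induction a using Fin.cases with
    | zero => exact ⟨Sum.inr (), rfl⟩
    | succ k => exact ⟨Sum.inl (Quotient.mk _ k), rfl⟩
  have := (Nat.card_eq_of_bijective G ⟨hinj, hsurj⟩).symm
  rw [this, Nat.card_sum]
  simp

lemma stirling {R : Type*} [CommRing R] (x : R) (n : ℕ) :
    ∑ σ : Perm (Fin n),
        x ^ (Multiset.card σ.cycleType + (Finset.univ.filter fun a => σ a = a).card) =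
      ∏ i ∈ Finset.range n, (x + (i : R)) := by
  induction n with
  | zero =>
      have h1 : ∀ σ : Perm (Fin 0),
          Multiset.card σ.cycleType + (Finset.univ.filter fun a => σ a = a).card = 0 := by
        intro σ
        have hσ : σ = 1 := Equiv.ext fun i => i.elim0
        subst hσ
        simp
      rw [Finset.sum_congr rfl fun σ _ => by rw [h1 σ, pow_zero]]
      simp
  | succ n ih =>
      have hre := Fintype.sum_equiv (Equiv.Perm.decomposeFin (n := n))
        (fun σ' : Perm (Fin (n+1)) =>
          x ^ (Multiset.card σ'.cycleType + (Finset.univ.filter fun a => σ' a = a).card))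
        (fun pr : Fin (n+1) × Perm (Fin n) =>
          x ^ (Multiset.card (Equiv.Perm.decomposeFin.symm pr).cycleType
            + (Finset.univ.filter fun a => (Equiv.Perm.decomposeFin.symm pr) a = a).card))
        (fun σ' => by simp only [Equiv.symm_apply_apply])
      rw [hre, Fintype.sum_prod_type, Fin.sum_univ_succ]
      have hz : ∀ σ : Perm (Fin n),
          Multiset.card (Equiv.Perm.decomposeFin.symm ((0 : Fin (n+1)), σ)).cycleType
            + (Finset.univ.filter
                fun a => (Equiv.Perm.decomposeFin.symm ((0 : Fin (n+1)), σ)) a = a).card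
          = (Multiset.card σ.cycleType + (Finset.univ.filter fun a => σ a = a).card) + 1 := by
        intro σ
        rw [cyc_eq, cyc_eq, ncyc_decomposeFin_zero]
      have hq : ∀ (q : Fin n) (σ : Perm (Fin n)),
          Multiset.card (Equiv.Perm.decomposeFin.symm (q.succ, σ)).cycleType
            + (Finset.univ.filter
                fun a => (Equiv.Perm.decomposeFin.symm (q.succ, σ)) a = a).card
          = Multiset.card σ.cycleType + (Finset.univ.filter fun a => σ a = a).card := by
        intro q σ
        rw [cyc_eq, cyc_eq, ncyc_decomposeFin_succ]
      rw [Finset.sum_congr rfl fun σ _ => by rw [hz σ]]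
      rw [Finset.sum_congr rfl fun q _ => Finset.sum_congr rfl fun σ _ => by rw [hq q σ]]
      rw [Finset.sum_const, Finset.prod_range_succ, ← ih]
      simp only [pow_succ, Finset.card_univ, Fintype.card_fin, smul_eq_mul, ← Finset.sum_mul]
      ring

/-- interleaving equivalence: `inl k ↦ 2k`, `inr k ↦ 2k+1`. -/
def interleave (n : ℕ) : (Fin n ⊕ Fin n) ≃ Fin (2 * n) where
  toFun := Sum.elim (fun k => ⟨2 * k.val, by have := k.isLt; omega⟩)
    (fun k => ⟨2 * k.val + 1, by have := k.isLt; omega⟩)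
  invFun i := if _ : i.val % 2 = 0 then Sum.inl ⟨i.val / 2, by have := i.isLt; omega⟩
    else Sum.inr ⟨i.val / 2, by have := i.isLt; omega⟩
  left_inv z := by
    rcases z with k | k
    · simp only [Sum.elim_inl]
      simp only [show 2 * k.val % 2 = 0 by omega, ↓reduceDIte]
      exact congrArg Sum.inl (Fin.ext (show 2 * k.val / 2 = k.val by omega))
    · simp only [Sum.elim_inr]
      simp only [show ¬((2 * k.val + 1) % 2 = 0) by omega, ↓reduceDIte]
      exact congrArg Sum.inr (Fin.ext (show (2 * k.val + 1) / 2 = k.val by omega))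
  right_inv i := by
    by_cases h : i.val % 2 = 0
    · simp only [dif_pos h, Sum.elim_inl]
      exact Fin.ext (show 2 * (i.val / 2) = i.val by omega)
    · simp only [dif_neg h, Sum.elim_inr]
      exact Fin.ext (show 2 * (i.val / 2) + 1 = i.val by omega)

lemma interleave_inl {n : ℕ} (k : Fin n) : ((interleave n) (Sum.inl k)).val = 2 * k.val := rfl
lemma interleave_inr {n : ℕ} (k : Fin n) :
    ((interleave n) (Sum.inr k)).val = 2 * k.val + 1 := rfl

/-- The parity-alternating permutation built from `α` (action on evens) and `β`. -/
def phi {n : ℕ} (α β : Perm (Fin n)) : Perm (Fin (2 * n)) :=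
  (interleave n).permCongr ((Equiv.sumCongr α β).trans (Equiv.sumComm _ _))

lemma phi_inl {n : ℕ} (α β : Perm (Fin n)) (k : Fin n) :
    phi α β ((interleave n) (Sum.inl k)) = (interleave n) (Sum.inr (α k)) := by
  simp [phi, Equiv.permCongr_apply]

lemma phi_inr {n : ℕ} (α β : Perm (Fin n)) (k : Fin n) :
    phi α β ((interleave n) (Sum.inr k)) = (interleave n) (Sum.inl (β k)) := by
  simp [phi, Equiv.permCongr_apply]

lemma cyc_phi {n : ℕ} (α β : Perm (Fin n)) :
    Multiset.card (phi α β).cycleType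
        + (Finset.univ.filter fun j => phi α β j = j).card
      = Multiset.card (β * α).cycleType
        + (Finset.univ.filter fun j => (β * α) j = j).card := by
  rw [cyc_eq, cyc_eq]
  refine (cardQuot_eq (β * α) (phi α β)
    (fun k => (interleave n) (Sum.inl k))
    (fun i => Sum.elim (fun k => k) (fun j => β j) ((interleave n).symm i))
    ?_ ?_ ?_ ?_).symm
  · intro a
    have e1 : phi α β (phi α β ((interleave n) (Sum.inl a)))
        = (interleave n) (Sum.inl ((β * α) a)) := by
      rw [phi_inl, phi_inr]; rfl
    show (phi α β).SameCycle ((interleave n) (Sum.inl ((β * α) a)))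
      ((interleave n) (Sum.inl a))
    rw [← e1]
    exact sameCycle_apply_left.mpr (sameCycle_apply_left.mpr SameCycle.rfl)
  · intro b
    obtain ⟨z, rfl⟩ := (interleave n).surjective b
    rcases z with k | k
    · rw [phi_inl]
      simp only [Equiv.symm_apply_apply, Sum.elim_inl, Sum.elim_inr]
      exact sameCycle_apply_left.mpr SameCycle.rfl
    · rw [phi_inr]
      simp only [Equiv.symm_apply_apply, Sum.elim_inl, Sum.elim_inr]
      exact SameCycle.rfl
  · intro a; simp
  · intro b
    obtain ⟨z, rfl⟩ := (interleave n).surjective b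
    rcases z with k | k
    · simp only [Equiv.symm_apply_apply, Sum.elim_inl]
      exact SameCycle.rfl
    · simp only [Equiv.symm_apply_apply, Sum.elim_inr]
      rw [← phi_inr α β k]
      exact sameCycle_apply_left.mpr SameCycle.rfl


end ParityCyc

open ParityCyc

/-- Cycle-counting sum over parity-alternating permutations: for every positive `n` and
every element `x` of a commutative ring,
`∑_{π ∈ S̃_{2n}} x^{cyc(π)} = n! · x·(x+1)⋯(x+n−1)`, where `S̃_{2n}` is the set of
permutations of `{1,…,2n}` (here `Fin (2n)`) mapping each element to one of opposite
parity, and `cyc(π)` is the total number of cycles of `π`, fixed points counted as cycles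
of length 1 (in Mathlib terms, `cyc(π) = Multiset.card π.cycleType + #{x : π x = x}`). -/
theorem parity_alternating_cycle_sum (R : Type*) [CommRing R] (n : ℕ) (hn : 0 < n)
    (x : R) :
    ∑ π ∈ Finset.univ.filter
        (fun π : Equiv.Perm (Fin (2 * n)) => ∀ i, (π i).val % 2 ≠ i.val % 2),
      x ^ (Multiset.card π.cycleType + (Finset.univ.filter fun j => π j = j).card) =
      (n.factorial : R) * ∏ i ∈ Finset.range n, (x + (i : R)) := by
  classical
  have hmem : ∀ pr : Perm (Fin n) × Perm (Fin n), ∀ i : Fin (2 * n),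
      ((phi pr.1 pr.2) i).val % 2 ≠ i.val % 2 := by
    rintro ⟨α, β⟩ i
    obtain ⟨z, rfl⟩ := (interleave n).surjective i
    rcases z with k | k
    · rw [phi_inl]
      rw [interleave_inl, interleave_inr]
      omega
    · rw [phi_inr]
      rw [interleave_inl, interleave_inr]
      omega
  have step1 : ∑ π ∈ Finset.univ.filter
        (fun π : Equiv.Perm (Fin (2 * n)) => ∀ i, (π i).val % 2 ≠ i.val % 2),
      x ^ (Multiset.card π.cycleType + (Finset.univ.filter fun j => π j = j).card)
      = ∑ pr ∈ (Finset.univ : Finset (Perm (Fin n) × Perm (Fin n))),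
        x ^ (Multiset.card (pr.2 * pr.1).cycleType
          + (Finset.univ.filter fun j => (pr.2 * pr.1) j = j).card) := by
    refine (Finset.sum_bij (fun pr _ => phi pr.1 pr.2) ?_ ?_ ?_ ?_).symm
    · intro pr _
      exact Finset.mem_filter.mpr ⟨Finset.mem_univ _, hmem pr⟩
    · rintro ⟨α, β⟩ _ ⟨α', β'⟩ _ h
      have hα : α = α' := by
        refine Equiv.ext fun k => ?_
        have := congrArg (fun (π : Perm (Fin (2*n))) => π ((interleave n) (Sum.inl k))) h
        simp only [phi_inl] at this
        exact Sum.inr.inj ((interleave n).injective this)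
      have hβ : β = β' := by
        refine Equiv.ext fun k => ?_
        have := congrArg (fun (π : Perm (Fin (2*n))) => π ((interleave n) (Sum.inr k))) h
        simp only [phi_inr] at this
        exact Sum.inl.inj ((interleave n).injective this)
      simp [hα, hβ]
    · intro π hπ
      have hπ' : ∀ i : Fin (2 * n), (π i).val % 2 ≠ i.val % 2 :=
        (Finset.mem_filter.mp hπ).2
      -- construct α
      have hodd : ∀ k : Fin n, (π ((interleave n) (Sum.inl k))).val % 2 = 1 := by
        intro k
        have := hπ' ((interleave n) (Sum.inl k))
        rw [interleave_inl] at this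
        omega
      have heven : ∀ k : Fin n, (π ((interleave n) (Sum.inr k))).val % 2 = 0 := by
        intro k
        have := hπ' ((interleave n) (Sum.inr k))
        rw [interleave_inr] at this
        omega
      let α0 : Fin n → Fin n := fun k =>
        ⟨(π ((interleave n) (Sum.inl k))).val / 2,
          by have := (π ((interleave n) (Sum.inl k))).isLt; omega⟩
      let β0 : Fin n → Fin n := fun k =>
        ⟨(π ((interleave n) (Sum.inr k))).val / 2,
          by have := (π ((interleave n) (Sum.inr k))).isLt; omega⟩
      have hα0 : Function.Injective α0 := by
        intro k k' h
        have h2 : (π ((interleave n) (Sum.inl k))).val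
            = (π ((interleave n) (Sum.inl k'))).val := by
          have e := congrArg Fin.val h
          have o1 := hodd k; have o2 := hodd k'
          simp only [α0] at e
          omega
        exact Sum.inl.inj ((interleave n).injective (π.injective (Fin.ext h2)))
      have hβ0 : Function.Injective β0 := by
        intro k k' h
        have h2 : (π ((interleave n) (Sum.inr k))).val
            = (π ((interleave n) (Sum.inr k'))).val := by
          have e := congrArg Fin.val h
          have o1 := heven k; have o2 := heven k'
          simp only [β0] at e
          omega
        exact Sum.inr.inj ((interleave n).injective (π.injective (Fin.ext h2)))
      let α : Perm (Fin n) := Equiv.ofBijective α0 (Finite.injective_iff_bijective.mp hα0)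
      let β : Perm (Fin n) := Equiv.ofBijective β0 (Finite.injective_iff_bijective.mp hβ0)
      refine ⟨(α, β), Finset.mem_univ _, ?_⟩
      refine Equiv.ext fun i => ?_
      obtain ⟨z, rfl⟩ := (interleave n).surjective i
      rcases z with k | k
      · rw [phi_inl]
        refine Fin.ext ?_
        show ((interleave n) (Sum.inr (α0 k))).val = _
        rw [interleave_inr]
        have := hodd k
        show 2 * ((π ((interleave n) (Sum.inl k))).val / 2) + 1 = _
        omega
      · rw [phi_inr]
        refine Fin.ext ?_
        show ((interleave n) (Sum.inl (β0 k))).val = _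
        rw [interleave_inl]
        have := heven k
        show 2 * ((π ((interleave n) (Sum.inr k))).val / 2) = _
        omega
    · intro pr _
      rw [cyc_phi pr.1 pr.2]
  rw [step1, Fintype.sum_prod_type]
  have hinner : ∀ α : Perm (Fin n),
      ∑ β : Perm (Fin n), x ^ (Multiset.card (β * α).cycleType
          + (Finset.univ.filter fun j => (β * α) j = j).card)
      = ∑ ρ : Perm (Fin n), x ^ (Multiset.card ρ.cycleType
          + (Finset.univ.filter fun j => ρ j = j).card) := by
    intro α
    exact Fintype.sum_equiv (Equiv.mulRight α) _ _ (fun β => rfl)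
  rw [Finset.sum_congr rfl fun α _ => hinner α]
  rw [Finset.sum_const, Finset.card_univ, Fintype.card_perm, Fintype.card_fin,
    stirling x n, nsmul_eq_mul]
end
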